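/- The number of maximal independent sets of C_n up to rotation (orbits under the cyclic group of rotations) equals the number of cyclic compositions of n in which every part is 2 or 3. -/

import Mathlib

/-- The Perrin sequence: p 1 = 0, p 2 = 2, p 3 = 3, p n = p (n-2) + p (n-3). -/
def perrin : ℕ → ℕ
  | 0 => 3
  | 1 => 0
  | 2 => 2
  | n + 3 => perrin (n + 1) + perrin n

/-- The Padovan sequence: q 1 = 0, q 2 = 1, q 3 = 1, q n = q (n-2) + q (n-3). -/
def padovan : ℕ → ℕ
  | 0 => 1
  | 1 => 0
  | 2 => 1
  | n + 3 => padovan (n + 1) + padovan n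

/-- r n = q k if n = 2k - 1 is odd, q (k+2) if n = 2k is even. -/
def rseq (n : ℕ) : ℕ := if n % 2 = 1 then padovan ((n + 1) / 2) else padovan (n / 2 + 2)

/-- The cycle graph C_n on vertex set ZMod n. -/
def cycleGraph (n : ℕ) : SimpleGraph (ZMod n) := SimpleGraph.fromRel (fun i j => j = i + 1)

/-- X is a maximal independent set of C_n. -/
def IsMIS (n : ℕ) (X : Set (ZMod n)) : Prop :=
  X.Pairwise (fun a b => ¬ (cycleGraph n).Adj a b) ∧
  ∀ Y : Set (ZMod n), Y.Pairwise (fun a b => ¬ (cycleGraph n).Adj a b) → X ⊆ Y → X = Y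

/-- The element of the dihedral group D_{2n} indexed by (k, ε) acts on ZMod n:
rotation σ^k (x ↦ x + k) if ε = false, reflection σ^k τ (x ↦ k - x) if ε = true. -/
def dihApply (n : ℕ) (g : ZMod n × Bool) (x : ZMod n) : ZMod n :=
  if g.2 then g.1 - x else x + g.1

/-- The orbit of X under the dihedral group D_{2n}. -/
def dOrbit (n : ℕ) (X : Set (ZMod n)) : Set (Set (ZMod n)) :=
  {Y | ∃ g : ZMod n × Bool, dihApply n g '' X = Y}

/-- The stabilizer of X in the dihedral group D_{2n}. -/
def dStab (n : ℕ) (X : Set (ZMod n)) : Set (ZMod n × Bool) :=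
  {g | dihApply n g '' X = X}

/-- The set of orbits of maximal independent sets of C_n under D_{2n}. -/
def misOrbits (n : ℕ) : Set (Set (Set (ZMod n))) :=
  {O | ∃ X, IsMIS n X ∧ O = dOrbit n X}

/-- orb n : the number of orbits of MISs of C_n under D_{2n}. -/
noncomputable def orb (n : ℕ) : ℕ := (misOrbits n).ncard

/-- orb_d n : the number of orbits of MISs of C_n whose elements have stabilizer
of cardinality d (equivalently, orbits of size 2n/d). -/
noncomputable def orbd (d n : ℕ) : ℕ :=
  {O | ∃ X, IsMIS n X ∧ O = dOrbit n X ∧ (dStab n X).ncard = d}.ncard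

/-- The rotation σ^k on ZMod n. -/
def rotApply (n : ℕ) (k : ZMod n) (x : ZMod n) : ZMod n := x + k

/-- The orbit of X under the cyclic rotation group ⟨σ⟩. -/
def rOrbit (n : ℕ) (X : Set (ZMod n)) : Set (Set (ZMod n)) :=
  {Y | ∃ k : ZMod n, rotApply n k '' X = Y}

/-- The stabilizer of X in the rotation group ⟨σ⟩. -/
def rStab (n : ℕ) (X : Set (ZMod n)) : Set (ZMod n) :=
  {k | rotApply n k '' X = X}

/-- orb^σ n : the number of orbits of MISs of C_n under rotations (unlabeled MISs). -/
noncomputable def orbSigma (n : ℕ) : ℕ := {O | ∃ X, IsMIS n X ∧ O = rOrbit n X}.ncard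

/-- orb^σ_d n : the number of rotation-orbits of MISs of C_n whose elements have
stabilizer of cardinality d in ⟨σ⟩. -/
noncomputable def orbdSigma (d n : ℕ) : ℕ :=
  {O | ∃ X, IsMIS n X ∧ O = rOrbit n X ∧ (rStab n X).ncard = d}.ncard

/-- X has at least one symmetry axis: it is fixed by some reflection x ↦ k - x. -/
def HasAxis (n : ℕ) (X : Set (ZMod n)) : Prop := ∃ k : ZMod n, (fun x => k - x) '' X = X

/-- The number of orbits of MISs of C_n under D_{2n} whose elements have at least
one symmetry axis. -/
noncomputable def orbAxis (n : ℕ) : ℕ :=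
  {O | ∃ X, IsMIS n X ∧ O = dOrbit n X ∧ HasAxis n X}.ncard

/-- Every part of the list is 2 or 3. -/
def parts23 (l : List ℕ) : Prop := ∀ a ∈ l, a = 2 ∨ a = 3

/-- The cyclic class of a composition: all rotations of the list. -/
def rotClass (l : List ℕ) : Set (List ℕ) := {m | ∃ k, m = l.rotate k}

/-- The cyclic class of a composition up to rotation and reversal. -/
def rotRevClass (l : List ℕ) : Set (List ℕ) :=
  {m | ∃ k, m = l.rotate k ∨ m = l.reverse.rotate k}


namespace CycAux


def pre (l : List ℕ) (i : ℕ) : ℕ := (l.take i).sum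

def pts (n : ℕ) (l : List ℕ) : Set (ZMod n) := {x | ∃ i < l.length, x = (pre l i : ZMod n)}

@[simp] lemma pre_zero (l : List ℕ) : pre l 0 = 0 := rfl

lemma pre_length (l : List ℕ) : pre l l.length = l.sum := by simp [pre]

lemma pre_of_le {l : List ℕ} {i : ℕ} (h : l.length ≤ i) : pre l i = l.sum := by
  simp [pre, List.take_of_length_le h]

lemma pre_succ {l : List ℕ} {i : ℕ} (h : i < l.length) :
    pre l (i+1) = pre l i + l.get ⟨i, h⟩ := List.sum_take_succ l i h

lemma pre_cons (a : ℕ) (t : List ℕ) (i : ℕ) : pre (a :: t) (i+1) = a + pre t i := by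
  simp [pre, List.take_cons]

lemma pre_mono (l : List ℕ) : Monotone (pre l) := by
  apply monotone_nat_of_le_succ
  intro i
  rcases Nat.lt_or_ge i l.length with h | h
  · rw [pre_succ h]; omega
  · rw [pre_of_le h, pre_of_le (by omega)]

lemma pre_step_ge {l : List ℕ} (hl : parts23 l) {i : ℕ} (h : i < l.length) :
    pre l i + 2 ≤ pre l (i+1) := by
  rw [pre_succ h]
  rcases hl _ (List.get_mem l ⟨i, h⟩) with h2 | h2 <;> omega

lemma pre_step_le {l : List ℕ} (hl : parts23 l) {i : ℕ} (h : i < l.length) :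
    pre l (i+1) ≤ pre l i + 3 := by
  rw [pre_succ h]
  rcases hl _ (List.get_mem l ⟨i, h⟩) with h2 | h2 <;> omega

lemma pre_strict {l : List ℕ} (hl : parts23 l) {i j : ℕ} (hij : i < j) (hj : j ≤ l.length) :
    pre l i + 2 ≤ pre l j :=
  le_trans (pre_step_ge hl (lt_of_lt_of_le hij hj)) (pre_mono l hij)

lemma pre_lt_sum {l : List ℕ} (hl : parts23 l) {i : ℕ} (hi : i < l.length) :
    pre l i + 2 ≤ l.sum := by
  have := pre_strict hl hi (le_refl l.length)
  rwa [pre_length] at this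




lemma adj_iff {n : ℕ} {a b : ZMod n} :
    (cycleGraph n).Adj a b ↔ a ≠ b ∧ (b = a + 1 ∨ a = b + 1) := by
  simp [cycleGraph, SimpleGraph.fromRel_adj]

lemma one_ne_zero_aux {n : ℕ} (hn : 3 ≤ n) : (1 : ZMod n) ≠ 0 := by
  haveI : Fact (1 < n) := ⟨by omega⟩
  exact one_ne_zero

lemma ne_add_one {n : ℕ} (hn : 3 ≤ n) (x : ZMod n) : x ≠ x + 1 := by
  intro h
  exact one_ne_zero_aux hn (by linear_combination -h)

lemma isMIS_iff {n : ℕ} (hn : 3 ≤ n) {X : Set (ZMod n)} :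
    IsMIS n X ↔ (∀ x ∈ X, x + 1 ∉ X) ∧ (∀ x, x ∉ X → x + 1 ∈ X ∨ x - 1 ∈ X) := by
  constructor
  · rintro ⟨hind, hmax⟩
    constructor
    · intro x hx hx1
      exact hind hx hx1 (ne_add_one hn x) (adj_iff.mpr ⟨ne_add_one hn x, Or.inl rfl⟩)
    · intro x hx
      by_contra hcon
      push_neg at hcon
      obtain ⟨h1, h2⟩ := hcon
      have hsub : X ⊆ insert x X := Set.subset_insert x X
      have hpair : (insert x X).Pairwise (fun a b => ¬ (cycleGraph n).Adj a b) := by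
        intro a ha b hb hab hadj
        rcases adj_iff.mp hadj with ⟨-, hc | hc⟩
        · rcases ha with rfl | ha
          · rcases hb with rfl | hb
            · exact hab rfl
            · subst hc; exact h1 hb
          · rcases hb with rfl | hb
            · subst hc; exact h2 (by rw [add_sub_cancel_right]; exact ha)
            · subst hc; exact hind ha hb hab (adj_iff.mpr ⟨hab, Or.inl rfl⟩)
        · rcases ha with rfl | ha
          · rcases hb with rfl | hb
            · exact hab rfl
            · subst hc; exact h2 (by rw [add_sub_cancel_right]; exact hb)
          · rcases hb with rfl | hb
            · subst hc; exact h1 ha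
            · subst hc; exact hind hb ha hab.symm (adj_iff.mpr ⟨hab.symm, Or.inl rfl⟩)
      have := hmax _ hpair hsub
      exact hx (this ▸ Set.mem_insert x X)
  · rintro ⟨hind, hdom⟩
    constructor
    · intro a ha b hb hab hadj
      rcases adj_iff.mp hadj with ⟨-, rfl | rfl⟩
      · exact hind a ha hb
      · exact hind b hb ha
    · intro Y hY hXY
      refine Set.Subset.antisymm hXY (fun y hy => ?_)
      by_contra hyX
      rcases hdom y hyX with h | h
      · exact hY hy (hXY h) (ne_add_one hn y) (adj_iff.mpr ⟨ne_add_one hn y, Or.inl rfl⟩)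
      · have hne : y - 1 ≠ y := fun e => ne_add_one hn y (by linear_combination e)
        exact hY (hXY h) hy hne (adj_iff.mpr ⟨hne, Or.inl (by ring)⟩)
  



variable {n : ℕ}

lemma natCast_inj_lt {a b : ℕ} (ha : a < n) (hb : b < n) (h : (a : ZMod n) = b) : a = b := by
  have := congrArg ZMod.val h
  rwa [ZMod.val_cast_of_lt ha, ZMod.val_cast_of_lt hb] at this

lemma cast_val_eq (hn : 3 ≤ n) (x : ZMod n) : ((x.val : ℕ) : ZMod n) = x := by
  haveI : NeZero n := ⟨by omega⟩
  simp [ZMod.natCast_val]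

lemma val_lt (hn : 3 ≤ n) (x : ZMod n) : x.val < n := by
  haveI : NeZero n := ⟨by omega⟩
  exact ZMod.val_lt x


variable {n : ℕ} {X : Set (ZMod n)}

lemma length_pos (hn : 3 ≤ n) {l : List ℕ} (hs : l.sum = n) : 0 < l.length := by
  rcases l with _ | ⟨a, t⟩
  · simp at hs; omega
  · simp

lemma locate {l : List ℕ} (hl : parts23 l) (hs : l.sum = n) (hn : 3 ≤ n) {m : ℕ} (hm : m < n) :
    ∃ i, i < l.length ∧ pre l i ≤ m ∧ m < pre l (i+1) := by
  set P : ℕ → Prop := fun j => pre l j ≤ m with hP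
  have hP0 : P 0 := by simp [hP, pre_zero]
  set i := Nat.findGreatest P l.length with hi
  have hspec : P i := Nat.findGreatest_spec (Nat.zero_le _) hP0
  have hle : i ≤ l.length := Nat.findGreatest_le _
  have hne : i ≠ l.length := by
    intro h
    have : pre l i = n := by rw [h, pre_length, hs]
    simp only [hP] at hspec; omega
  have hlt : i < l.length := lt_of_le_of_ne hle hne
  refine ⟨i, hlt, hspec, ?_⟩
  by_contra hcon
  push_neg at hcon
  exact Nat.findGreatest_is_greatest (Nat.lt_succ_self i) (by omega) hcon

lemma zero_mem_pts (hn : 3 ≤ n) {l : List ℕ} (hs : l.sum = n) : (0 : ZMod n) ∈ pts n l :=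
  ⟨0, length_pos hn hs, by simp [pre_zero]⟩

lemma mem_pts_iff {l : List ℕ} (hl : parts23 l) (hs : l.sum = n) (hn : 3 ≤ n) {m : ℕ}
    (hm : m < n) : ((m : ZMod n) ∈ pts n l) ↔ ∃ i < l.length, m = pre l i := by
  constructor
  · rintro ⟨i, hi, hcast⟩
    have hpl : pre l i < n := by have := pre_lt_sum hl hi; omega
    exact ⟨i, hi, natCast_inj_lt hm hpl hcast⟩
  · rintro ⟨i, hi, rfl⟩
    exact ⟨i, hi, rfl⟩

lemma pts_indep {l : List ℕ} (hl : parts23 l) (hs : l.sum = n) (hn : 3 ≤ n) :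
    ∀ x ∈ pts n l, x + 1 ∉ pts n l := by
  rintro x ⟨i, hi, rfl⟩ ⟨j, hj, hcast⟩
  have hpi : pre l i + 2 ≤ n := by have := pre_lt_sum hl hi; omega
  have hpj : pre l j < n := by have := pre_lt_sum hl hj; omega
  have : ((pre l i + 1 : ℕ) : ZMod n) = ((pre l j : ℕ) : ZMod n) := by push_cast; rw [hcast]
  have heq : pre l i + 1 = pre l j := natCast_inj_lt (by omega) hpj this
  rcases Nat.lt_or_ge i j with h | h
  · have := pre_strict hl h (le_of_lt hj); omega
  · have := pre_mono l h; omega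

lemma pts_MIS_parts {l : List ℕ} (hl : parts23 l) (hs : l.sum = n) (hn : 3 ≤ n) :
    (∀ x ∈ pts n l, x + 1 ∉ pts n l) ∧
    (∀ x, x ∉ pts n l → x + 1 ∈ pts n l ∨ x - 1 ∈ pts n l) := by
  refine ⟨pts_indep hl hs hn, fun x hx => ?_⟩
  set m := x.val with hmdef
  have hm : m < n := val_lt hn x
  have hxm : ((m : ℕ) : ZMod n) = x := cast_val_eq hn x
  obtain ⟨i, hi, h1, h2⟩ := locate hl hs hn hm
  have h3 : pre l (i+1) ≤ pre l i + 3 := pre_step_le hl hi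
  have hmne : m ≠ pre l i := by
    intro h
    exact hx ⟨i, hi, by rw [← hxm, h]⟩
  rcases (by omega : m = pre l i + 1 ∨ m = pre l i + 2) with h | h
  · right
    refine ⟨i, hi, ?_⟩
    rw [← hxm, h]
    push_cast
    ring
  · left
    have h4 : pre l (i+1) = pre l i + 3 := by omega
    have hx1 : x + 1 = ((pre l (i+1) : ℕ) : ZMod n) := by
      rw [← hxm, h, h4]; push_cast; ring
    rcases Nat.lt_or_ge (i+1) l.length with h5 | h5
    · exact ⟨i+1, h5, hx1⟩
    · have h6 : i + 1 = l.length := by omega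
      refine ⟨0, by omega, ?_⟩
      rw [hx1, h6, pre_length, hs, pre_zero]
      simp

open scoped Classical in
noncomputable def gaps (n : ℕ) (X : Set (ZMod n)) (c : ℕ) : List ℕ :=
  if n ≤ c + 3 then [n - c]
  else if (((c + 2 : ℕ) : ZMod n) ∈ X) then 2 :: gaps n X (c + 2) else 3 :: gaps n X (c + 3)
termination_by n - c
decreasing_by all_goals omega

variable {n : ℕ} {X : Set (ZMod n)}

lemma gaps_spec (hn : 3 ≤ n) (hind : ∀ x ∈ X, x + 1 ∉ X)
    (hdom : ∀ x, x ∉ X → x + 1 ∈ X ∨ x - 1 ∈ X) (h0 : (0 : ZMod n) ∈ X) :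
    ∀ k c, n - c ≤ k → c + 2 ≤ n → ((c : ℕ) : ZMod n) ∈ X →
    parts23 (gaps n X c) ∧ (gaps n X c).sum = n - c ∧
    (∀ i < (gaps n X c).length, (((c + pre (gaps n X c) i : ℕ)) : ZMod n) ∈ X) ∧
    (∀ m, c ≤ m → m < n → ((m : ℕ) : ZMod n) ∈ X →
      ∃ i < (gaps n X c).length, m = c + pre (gaps n X c) i) := by
  intro k
  induction k with
  | zero => intro c h1 h2 _; omega
  | succ k ih =>
    intro c h1 h2 hc
    have hsucc : ((c : ℕ) : ZMod n) + 1 = (((c+1 : ℕ)) : ZMod n) := by push_cast; ring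
    have hc1 : (((c+1 : ℕ)) : ZMod n) ∉ X := by
      rw [← hsucc]; exact hind _ hc
    by_cases h : n ≤ c + 3
    · -- terminal case
      have hg : gaps n X c = [n - c] := by rw [gaps]; simp [h]
      rw [hg]
      refine ⟨?_, by simp, ?_, ?_⟩
      · intro a ha
        simp at ha
        omega
      · intro i hi
        simp at hi
        subst hi
        simpa [pre] using hc
      · intro m hm1 hm2 hm3
        refine ⟨0, by simp, ?_⟩
        simp only [pre, List.take_zero, List.sum_nil, Nat.add_zero]
        by_contra hne
        have hm4 : m = c + 1 ∨ m = c + 2 := by omega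
        rcases hm4 with rfl | rfl
        · exact hc1 hm3
        · -- m = c + 2, and then n = c + 3, so m = n - 1
          have hn3 : n = c + 3 := by omega
          have : (((c + 2 : ℕ)) : ZMod n) + 1 = 0 := by
            have : (((c + 3 : ℕ)) : ZMod n) = 0 := by rw [hn3]; simp
            push_cast at this ⊢
            linear_combination this
          exact hind _ hm3 (this ▸ h0)
    · -- recursive case
      push_neg at h
      have hkey : ∀ d : ℕ, d = 2 ∨ d = 3 → (((c + d : ℕ)) : ZMod n) ∈ X → c + d + 2 ≤ n →
          n - (c + d) ≤ k →
          parts23 (d :: gaps n X (c + d)) ∧ (d :: gaps n X (c + d)).sum = n - c ∧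
          (∀ i < (d :: gaps n X (c + d)).length,
            (((c + pre (d :: gaps n X (c + d)) i : ℕ)) : ZMod n) ∈ X) ∧
          (∀ m, c ≤ m → m < n → ((m : ℕ) : ZMod n) ∈ X → (m = c ∨ c + d ≤ m) →
            ∃ i < (d :: gaps n X (c + d)).length, m = c + pre (d :: gaps n X (c + d)) i) := by
        intro d hd hmem hle hfuel
        obtain ⟨P1, P2, P3, P4⟩ := ih (c + d) hfuel hle hmem
        refine ⟨?_, ?_, ?_, ?_⟩
        · intro a ha
          rcases List.mem_cons.mp ha with rfl | ha
          · exact hd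
          · exact P1 _ ha
        · simp only [List.sum_cons, P2]; omega
        · intro i hi
          match i with
          | 0 => simpa [pre] using hc
          | (i+1) =>
            rw [pre_cons, ← Nat.add_assoc]
            exact P3 i (by simpa using hi)
        · intro m hm1 hm2 hm3 hm4
          rcases hm4 with rfl | hm4
          · exact ⟨0, by simp, by simp [pre]⟩
          · obtain ⟨i, hi, hieq⟩ := P4 m hm4 hm2 hm3
            exact ⟨i + 1, by simpa using hi, by rw [pre_cons]; omega⟩
      by_cases hc2 : (((c + 2 : ℕ)) : ZMod n) ∈ X
      · have hg : gaps n X c = 2 :: gaps n X (c + 2) := by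
          rw [gaps, if_neg (by omega : ¬ n ≤ c + 3), if_pos hc2]
        rw [hg]
        obtain ⟨Q1, Q2, Q3, Q4⟩ := hkey 2 (Or.inl rfl) hc2 (by omega) (by omega)
        refine ⟨Q1, Q2, Q3, fun m hm1 hm2 hm3 => Q4 m hm1 hm2 hm3 ?_⟩
        rcases (by omega : m = c ∨ m = c + 1 ∨ c + 2 ≤ m) with rfl | rfl | hm
        · exact Or.inl rfl
        · exact absurd hm3 hc1
        · exact Or.inr hm
      · -- gap is 3
        have hc3 : (((c + 3 : ℕ)) : ZMod n) ∈ X := by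
          rcases hdom _ hc2 with hmem | hmem
          · have : (((c + 2 : ℕ)) : ZMod n) + 1 = (((c + 3 : ℕ)) : ZMod n) := by push_cast; ring
            rwa [this] at hmem
          · exfalso
            have : (((c + 2 : ℕ)) : ZMod n) - 1 = (((c + 1 : ℕ)) : ZMod n) := by push_cast; ring
            rw [this] at hmem
            exact hc1 hmem
        have hfar : c + 5 ≤ n := by
          by_contra hcon
          have hn4 : n = c + 4 := by omega
          have : (((c + 3 : ℕ)) : ZMod n) + 1 = 0 := by
            have h4 : (((c + 4 : ℕ)) : ZMod n) = 0 := by rw [← hn4]; simp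
            push_cast at h4 ⊢
            linear_combination h4
          exact hind _ hc3 (this ▸ h0)
        have hg : gaps n X c = 3 :: gaps n X (c + 3) := by
          rw [gaps, if_neg (by omega : ¬ n ≤ c + 3), if_neg hc2]
        rw [hg]
        obtain ⟨Q1, Q2, Q3, Q4⟩ := hkey 3 (Or.inr rfl) hc3 (by omega) (by omega)
        refine ⟨Q1, Q2, Q3, fun m hm1 hm2 hm3 => Q4 m hm1 hm2 hm3 ?_⟩
        rcases (by omega : m = c ∨ m = c + 1 ∨ m = c + 2 ∨ c + 3 ≤ m) with rfl | rfl | rfl | hm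
        · exact Or.inl rfl
        · exact absurd hm3 hc1
        · exact absurd hm3 hc2
        · exact Or.inr hm

lemma pre_one (a : ℕ) (t : List ℕ) : pre (a :: t) 1 = a := by
  rw [show (1 : ℕ) = 0 + 1 from rfl, pre_cons]
  simp [pre]

lemma pre_two (a b : ℕ) (t : List ℕ) : pre (a :: b :: t) 2 = a + b := by
  rw [show (2 : ℕ) = 1 + 1 from rfl, pre_cons, pre_one]

lemma gaps_unique (hn : 3 ≤ n) :
    ∀ l c, parts23 l → l ≠ [] → c + l.sum = n →
    (∀ m, c ≤ m → m < n → (((m : ℕ) : ZMod n) ∈ X ↔ ∃ i < l.length, m = c + pre l i)) →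
    gaps n X c = l := by
  intro l
  induction l with
  | nil => intro c _ hne _ _; exact absurd rfl hne
  | cons a t iht =>
    intro c hp _ hsum hmatch
    have ha : a = 2 ∨ a = 3 := hp a (by simp)
    rcases t with _ | ⟨b, t'⟩
    · -- l = [a]
      have hna : c + a = n := by simpa using hsum
      rw [gaps, if_pos (by omega)]
      congr 1
      omega
    · -- l = a :: b :: t'
      have hb : b = 2 ∨ b = 3 := hp b (by simp)
      have hsum' : c + (a + (b + t'.sum)) = n := by simpa using hsum
      have hc4 : c + 4 ≤ n := by omega
      have hnle : ¬ n ≤ c + 3 := by omega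
      -- membership of c+2 in X is equivalent to a = 2
      have hmm := hmatch (c+2) (by omega) (by omega)
      have hL : (((c + 2 : ℕ) : ZMod n) ∈ X) ↔ a = 2 := by
        rw [hmm]
        constructor
        · rintro ⟨i, hi, heq⟩
          match i with
          | 0 => simp [pre] at heq
          | 1 => rw [pre_one] at heq; omega
          | (j+2) =>
            have h2 : pre (a :: b :: t') 2 ≤ pre (a :: b :: t') (j+2) :=
              pre_mono _ (by omega)
            rw [pre_two] at h2
            omega
        · intro h2
          exact ⟨1, by simp, by rw [pre_one]; omega⟩
      -- the conversion of the matching hypothesis to the tail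
      have hconv : ∀ d : ℕ, d = a →
          (∀ m, c + d ≤ m → m < n → (((m : ℕ) : ZMod n) ∈ X ↔
            ∃ i < (b :: t').length, m = (c + d) + pre (b :: t') i)) := by
        rintro d rfl m hm1 hm2
        rw [hmatch m (by omega) hm2]
        constructor
        · rintro ⟨i, hi, heq⟩
          match i with
          | 0 => simp [pre] at heq; omega
          | (j+1) =>
            rw [pre_cons] at heq
            exact ⟨j, by simpa using hi, by omega⟩
        · rintro ⟨j, hj, heq⟩
          exact ⟨j + 1, by simpa using hj, by rw [pre_cons]; omega⟩
      rcases ha with rfl | rfl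
      · have hmem : (((c + 2 : ℕ) : ZMod n) ∈ X) := hL.mpr rfl
        rw [gaps, if_neg hnle, if_pos hmem]
        congr 1
        exact iht (c + 2) (fun x hx => hp x (List.mem_cons_of_mem _ hx)) (by simp)
          (by simp only [List.sum_cons] at hsum ⊢; omega)
          (hconv 2 rfl)
      · have hmem : ¬ (((c + 2 : ℕ) : ZMod n) ∈ X) := fun hm => absurd (hL.mp hm) (by omega)
        rw [gaps, if_neg hnle, if_neg hmem]
        congr 1
        exact iht (c + 3) (fun x hx => hp x (List.mem_cons_of_mem _ hx)) (by simp)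
          (by simp only [List.sum_cons] at hsum ⊢; omega)
          (hconv 3 rfl)

lemma pre_rotate {l : List ℕ} (hs : l.sum = n) {j i : ℕ} (hj : j ≤ l.length)
    (hi : i < l.length) :
    (pre (l.rotate j) i : ZMod n) = (pre l ((j + i) % l.length) : ZMod n) - (pre l j : ZMod n) := by
  have hrot : l.rotate j = l.drop j ++ l.take j := List.rotate_eq_drop_append_take hj
  have hlend : (l.drop j).length = l.length - j := List.length_drop
  have hsplit : pre (l.rotate j) i = ((l.drop j).take i).sum + ((l.take j).take (i - (l.length - j))).sum := by
    rw [pre, hrot, List.take_append, List.sum_append, hlend]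
  have key1 : pre l j + ((l.drop j).take i).sum = pre l (j + i) := by
    rw [pre, pre, List.take_add, List.sum_append]
  have hmonoji : pre l j ≤ pre l (j+i) := pre_mono l (by omega)
  have hpjn : pre l j ≤ n := by
    have := pre_mono l hj
    rw [pre_length, hs] at this
    omega
  rcases Nat.lt_or_ge (j + i) l.length with hcase | hcase
  · -- no wraparound
    have h0 : i - (l.length - j) = 0 := by omega
    have hmod : (j + i) % l.length = j + i := Nat.mod_eq_of_lt hcase
    have : pre (l.rotate j) i = pre l (j + i) - pre l j := by
      rw [hsplit, h0]
      simp
      omega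
    rw [this, hmod, Nat.cast_sub hmonoji]
  · -- wraparound
    set i' := i + j - l.length with hi'
    have hi'lt : i' < j := by omega
    have h1 : i - (l.length - j) = i' := by omega
    have h2 : (l.take j).take i' = l.take i' := by
      rw [List.take_take]
      congr 1
      omega
    have h3 : pre l (j + i) = n := by rw [pre_of_le (by omega), hs]
    have hmod : (j + i) % l.length = i' := by
      have hlt : j + i - l.length < l.length := by omega
      rw [Nat.mod_eq_sub_mod (by omega), Nat.mod_eq_of_lt hlt]
      omega
    have : pre (l.rotate j) i = (n - pre l j) + pre l i' := by
      rw [hsplit, h1, h2]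
      have : ((l.drop j).take i).sum = n - pre l j := by omega
      rw [this]
      rfl
    rw [this, hmod]
    push_cast [Nat.cast_sub hpjn]
    simp
    ring

lemma pts_rotate {l : List ℕ} (hs : l.sum = n) (hlen : 0 < l.length) {j : ℕ} (hj : j ≤ l.length) :
    pts n (l.rotate j) = (fun x => x + (-(pre l j : ZMod n))) '' (pts n l) := by
  ext x
  constructor
  · rintro ⟨i, hi, rfl⟩
    rw [List.length_rotate] at hi
    have ht : (j + i) % l.length < l.length := Nat.mod_lt _ hlen
    refine ⟨(pre l ((j + i) % l.length) : ZMod n), ⟨_, ht, rfl⟩, ?_⟩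
    rw [pre_rotate hs hj hi]
    ring
  · rintro ⟨y, ⟨t, ht, rfl⟩, rfl⟩
    rcases Nat.lt_or_ge t j with hcase | hcase
    · refine ⟨t + l.length - j, by rw [List.length_rotate]; omega, ?_⟩
      have hmod : (j + (t + l.length - j)) % l.length = t := by
        have : j + (t + l.length - j) = t + l.length := by omega
        rw [this, Nat.add_mod_right, Nat.mod_eq_of_lt ht]
      rw [pre_rotate hs hj (by omega), hmod]
      ring
    · refine ⟨t - j, by rw [List.length_rotate]; omega, ?_⟩
      have hmod : (j + (t - j)) % l.length = t := by
        have : j + (t - j) = t := by omega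
        rw [this, Nat.mod_eq_of_lt ht]
      rw [pre_rotate hs hj (by omega), hmod]
      ring

lemma pts_mis (hn : 3 ≤ n) {l : List ℕ} (hl : parts23 l) (hs : l.sum = n) :
    IsMIS n (pts n l) := (isMIS_iff hn).mpr (pts_MIS_parts hl hs hn)

lemma gaps_pts (hn : 3 ≤ n) {l : List ℕ} (hl : parts23 l) (hs : l.sum = n) :
    gaps n (pts n l) 0 = l := by
  refine gaps_unique hn l 0 hl ?_ (by simpa using hs) ?_
  · have := length_pos hn hs
    intro h
    rw [h] at this
    simp at this
  · intro m _ hm2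
    rw [mem_pts_iff hl hs hn hm2]
    simp

lemma pts_inj (hn : 3 ≤ n) {l l' : List ℕ} (hl : parts23 l) (hl' : parts23 l')
    (hs : l.sum = n) (hs' : l'.sum = n) (h : pts n l = pts n l') : l = l' := by
  have h1 := gaps_pts hn hl hs
  have h2 := gaps_pts hn hl' hs'
  rw [← h1, ← h2, h]

lemma exists_pts (hn : 3 ≤ n) {X : Set (ZMod n)} (hX : IsMIS n X) :
    ∃ l, parts23 l ∧ l.sum = n ∧ pts n l ∈ rOrbit n X := by
  obtain ⟨hind, hdom⟩ := (isMIS_iff hn).mp hX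
  have hne : ∃ x, x ∈ X := by
    by_cases h0 : (0 : ZMod n) ∈ X
    · exact ⟨0, h0⟩
    · rcases hdom 0 h0 with h | h
      exacts [⟨_, h⟩, ⟨_, h⟩]
  obtain ⟨x0, hx0⟩ := hne
  set X' := rotApply n (-x0) '' X with hX'
  have hmem' : ∀ y, y ∈ X' ↔ y + x0 ∈ X := by
    intro y
    constructor
    · rintro ⟨x, hx, rfl⟩
      simpa [rotApply] using hx
    · intro h
      exact ⟨y + x0, h, by simp [rotApply]⟩
  have h0' : (0 : ZMod n) ∈ X' := (hmem' 0).mpr (by simpa using hx0)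
  have hind' : ∀ x ∈ X', x + 1 ∉ X' := by
    intro x hx hx1
    refine hind _ ((hmem' x).mp hx) ?_
    have := (hmem' (x+1)).mp hx1
    convert this using 1
    ring
  have hdom' : ∀ x, x ∉ X' → x + 1 ∈ X' ∨ x - 1 ∈ X' := by
    intro x hx
    rcases hdom (x + x0) (fun h => hx ((hmem' x).mpr h)) with h | h
    · left; exact (hmem' _).mpr (by convert h using 1; ring)
    · right; exact (hmem' _).mpr (by convert h using 1; ring)
  obtain ⟨P1, P2, P3, P4⟩ := gaps_spec hn hind' hdom' h0' n 0 (by omega) (by omega)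
    (by simpa using h0')
  refine ⟨gaps n X' 0, P1, by simpa using P2, ?_⟩
  have hpts : pts n (gaps n X' 0) = X' := by
    ext x
    constructor
    · rintro ⟨i, hi, rfl⟩
      simpa using P3 i hi
    · intro hx
      obtain ⟨i, hi, hieq⟩ := P4 x.val (by omega) (val_lt hn x)
        (by rw [cast_val_eq hn]; exact hx)
      exact ⟨i, hi, by rw [← cast_val_eq hn x, hieq]; simp⟩
  rw [hpts]
  exact ⟨-x0, rfl⟩


lemma rot_rot (a b : ZMod n) (X : Set (ZMod n)) :
    rotApply n a '' (rotApply n b '' X) = rotApply n (b + a) '' X := by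
  rw [← Set.image_comp]
  apply Set.image_congr
  intro x _
  simp [rotApply, add_assoc]

lemma rot_zero (X : Set (ZMod n)) : rotApply n 0 '' X = X := by
  have : rotApply n 0 = id := by funext x; simp [rotApply]
  rw [this, Set.image_id]

lemma mem_rOrbit_self (X : Set (ZMod n)) : X ∈ rOrbit n X := ⟨0, rot_zero X⟩

lemma rOrbit_eq_of_mem {X Y : Set (ZMod n)} (h : Y ∈ rOrbit n X) :
    rOrbit n Y = rOrbit n X := by
  obtain ⟨k, hk⟩ := h
  ext Z
  constructor
  · rintro ⟨k', rfl⟩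
    exact ⟨k + k', by rw [← rot_rot, hk]⟩
  · rintro ⟨k', rfl⟩
    exact ⟨-k + k', by rw [← hk, rot_rot, ← add_assoc, add_neg_cancel, zero_add]⟩

lemma rotate_parts {l : List ℕ} (hl : parts23 l) (j : ℕ) : parts23 (l.rotate j) :=
  fun a ha => hl a (List.mem_rotate.mp ha)

lemma rotate_sum (l : List ℕ) (j : ℕ) : (l.rotate j).sum = l.sum := (l.rotate_perm j).sum_eq

lemma pts_rotate_mem_orbit (hn : 3 ≤ n) {l : List ℕ} (hs : l.sum = n) (j : ℕ) :
    pts n (l.rotate j) ∈ rOrbit n (pts n l) := by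
  have hlen : 0 < l.length := length_pos hn hs
  have h1 : l.rotate j = l.rotate (j % l.length) := (List.rotate_mod l j).symm
  rw [h1, pts_rotate hs hlen (le_of_lt (Nat.mod_lt _ hlen))]
  exact ⟨-(pre l (j % l.length) : ZMod n), rfl⟩

lemma rotate_of_image_pts (hn : 3 ≤ n) {l l' : List ℕ} (hl : parts23 l) (hl' : parts23 l')
    (hs : l.sum = n) (hs' : l'.sum = n) {k : ZMod n}
    (h : rotApply n k '' pts n l = pts n l') : ∃ j, l' = l.rotate j := by
  have hlen' : 0 < l'.length := length_pos hn hs'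
  have hk : k ∈ pts n l' := by
    rw [← h]
    exact ⟨0, zero_mem_pts hn hs, by simp [rotApply]⟩
  obtain ⟨j, hj, hkeq⟩ := hk
  have hrot : pts n (l'.rotate j) = pts n l := by
    rw [pts_rotate hs' hlen' (le_of_lt hj)]
    have : (fun x => x + (-(pre l' j : ZMod n))) = rotApply n (-k) := by
      funext x; simp [rotApply, hkeq]
    rw [this, ← h, rot_rot, add_neg_cancel, rot_zero]
  have heq : l'.rotate j = l :=
    pts_inj hn (rotate_parts hl' j) hl (by rw [rotate_sum]; exact hs') hs hrot
  refine ⟨l'.length - j, ?_⟩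
  have : l.rotate (l'.length - j) = l'.rotate (j + (l'.length - j)) := by
    rw [← heq, List.rotate_rotate]
  rw [this, Nat.add_sub_cancel' (le_of_lt hj), List.rotate_length]


end CycAux


/-- The number of MISs of C_n up to rotation equals the number of cyclic compositions of n
with parts in {2,3}. -/
theorem orbSigma_eq_cyclic_compositions (n : ℕ) (hn : 3 ≤ n) :
    orbSigma n =
      {C : Set (List ℕ) | ∃ l, parts23 l ∧ l.sum = n ∧ C = rotClass l}.ncard := by
  classical
  open CycAux in
  have main : {O | ∃ X, IsMIS n X ∧ O = rOrbit n X}.ncard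
      = {C : Set (List ℕ) | ∃ l, parts23 l ∧ l.sum = n ∧ C = rotClass l}.ncard := by
    set A := {O | ∃ X, IsMIS n X ∧ O = rOrbit n X} with hA
    set B := {C : Set (List ℕ) | ∃ l, parts23 l ∧ l.sum = n ∧ C = rotClass l} with hB
    set F : Set (Set (ZMod n)) → Set (List ℕ) :=
      fun O => {l | parts23 l ∧ l.sum = n ∧ pts n l ∈ O} with hFdef
    have hF : ∀ X : Set (ZMod n), IsMIS n X → ∀ l, parts23 l → l.sum = n →
        pts n l ∈ rOrbit n X → F (rOrbit n X) = rotClass l := by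
      intro X hX l hl hs hmem
      have horb : rOrbit n (pts n l) = rOrbit n X := rOrbit_eq_of_mem hmem
      ext l₁
      constructor
      · rintro ⟨hp1, hs1, hm1⟩
        rw [← horb] at hm1
        obtain ⟨k, hk⟩ := hm1
        obtain ⟨j, hj⟩ := rotate_of_image_pts hn hl hp1 hs hs1 hk
        exact ⟨j, hj⟩
      · rintro ⟨j, rfl⟩
        refine ⟨rotate_parts hl j, by rw [rotate_sum]; exact hs, ?_⟩
        rw [← horb]
        exact pts_rotate_mem_orbit hn hs j
    have hBA : B = F '' A := by
      ext C
      constructor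
      · rintro ⟨l, hl, hs, rfl⟩
        refine ⟨rOrbit n (pts n l), ⟨pts n l, pts_mis hn hl hs, rfl⟩, ?_⟩
        exact hF _ (pts_mis hn hl hs) l hl hs (mem_rOrbit_self _)
      · rintro ⟨O, ⟨X, hX, rfl⟩, rfl⟩
        obtain ⟨l, hl, hs, hm⟩ := exists_pts hn hX
        exact ⟨l, hl, hs, hF X hX l hl hs hm⟩
    have hinj : Set.InjOn F A := by
      rintro O ⟨X, hX, rfl⟩ O' ⟨X', hX', rfl⟩ hFO
      obtain ⟨l, hl, hs, hm⟩ := exists_pts hn hX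
      have hlF : l ∈ F (rOrbit n X) := ⟨hl, hs, hm⟩
      rw [hFO] at hlF
      have hm' : pts n l ∈ rOrbit n X' := hlF.2.2
      rw [← rOrbit_eq_of_mem hm, rOrbit_eq_of_mem hm']
    rw [hBA, Set.ncard_image_of_injOn hinj]
  exact main
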